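/- arXiv:2307.13075 — 3 statements merged into one kernel-verified Lean document; each statement's English description precedes it below -/
import Mathlib

section
/- (¬TILE) ≡_m WELL, that is, (¬TILE) ≤_m WELL and WELL ≤_m (¬TILE). -/
/-- A Wang prototile: a 4-tuple `(l, u, r, b)` of natural-number edge colours. -/
abbrev WangTile : Type := ℕ × ℕ × ℕ × ℕ

def tileLeft (t : WangTile) : ℕ := t.1
def tileUp (t : WangTile) : ℕ := t.2.1
def tileRight (t : WangTile) : ℕ := t.2.2.1
def tileBottom (t : WangTile) : ℕ := t.2.2.2

/-- `f` is an `S`-tiling of the region `R ⊆ ℤ × ℤ`: on `R` the tiles come from `S`,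
and horizontally/vertically adjacent positions inside `R` have matching edge colours. -/
def IsTiling (S : Set WangTile) (R : Set (ℤ × ℤ)) (f : ℤ × ℤ → WangTile) : Prop :=
  (∀ p ∈ R, f p ∈ S) ∧
  (∀ x y : ℤ, ((x, y) : ℤ × ℤ) ∈ R → ((x + 1, y) : ℤ × ℤ) ∈ R →
    tileRight (f (x, y)) = tileLeft (f (x + 1, y))) ∧
  (∀ x y : ℤ, ((x, y) : ℤ × ℤ) ∈ R → ((x, y + 1) : ℤ × ℤ) ∈ R →
    tileUp (f (x, y)) = tileBottom (f (x, y + 1)))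

/-- The standard enumeration of partial computable functions `ℕ →. ℕ`. -/
def Phi (e : ℕ) : ℕ →. ℕ := (Denumerable.ofNat Nat.Partrec.Code e).eval

/-- `φ_e` is total. -/
def PhiTotal (e : ℕ) : Prop := ∀ m : ℕ, (Phi e m).Dom

/-- `φ_e` is total and `{0,1}`-valued. -/
def PhiTotalBool (e : ℕ) : Prop := ∀ m : ℕ, ∃ v : ℕ, v ∈ Phi e m ∧ (v = 0 ∨ v = 1)

/-- The set of Wang prototiles coded by `e`: tiles whose code is accepted by `φ_e`. -/
def PhiTileSet (e : ℕ) : Set WangTile := {t : WangTile | 1 ∈ Phi e (Encodable.encode t)}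

/-- The set of finite sequences coded by `e`: sequences whose code is accepted by `φ_e`. -/
def TSet (e : ℕ) : Set (List ℕ) := {σ : List ℕ | 1 ∈ Phi e (Encodable.encode σ)}

/-- A tree: a set of finite sequences closed under initial segments. -/
def IsTree (T : Set (List ℕ)) : Prop := ∀ σ ∈ T, ∀ τ : List ℕ, τ <+: σ → τ ∈ T

/-- A tree is ill-founded if it has an infinite path. -/
def IllFounded (T : Set (List ℕ)) : Prop :=
  ∃ p : ℕ → ℕ, ∀ n : ℕ, (List.range n).map p ∈ T

def NTILE : Set ℕ :=
  {e | PhiTotalBool e ∧ ¬ ∃ f : ℤ × ℤ → WangTile, IsTiling (PhiTileSet e) Set.univ f}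

def WELL : Set ℕ := {e | PhiTotalBool e ∧ IsTree (TSet e) ∧ ¬ IllFounded (TSet e)}

/-!
Both reductions send `e` to an index `g e`, obtained by s-m-n, such that on input `n` the function
`φ_{g e}` queries `φ_e` at finitely many places, outputs `2` if an answer is not a truth value,
and otherwise a truth value computed from the answers. As every place is queried on some input,
`g e` is total and `{0,1}`-valued exactly when `e` is, and then the set coded by `g e` is
described by the set coded by `e`.

`¬TILE ≤ WELL`: `σ` lies in the tree when the tiles coded by its entries, `σ[i]` placed on the
`i`-th cell of an enumeration of `ℤ × ℤ`, lie in `S_e` and match wherever they meet. The infinite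
paths are then exactly the total tilings.

`WELL ≤ ¬TILE`: the horizontal edges of a path tile carry a state `(z, σ)` with a column counter
`z`; a tile steps from `(z, [])` to `(z + 1, [])` when `z < 0`, and from `(z, σ)` to
`(z + 1, σ ++ [b])` with `σ ++ [b] ∈ T` when `|σ| = z`, and its vertical edges repeat its left
edge. Along a row the counter grows by one per column, so from the column where it is `0` on, the
row spells out an infinite path through `T`; conversely a path gives a row. If `T` is not a tree,
some `τ ∉ T` has an extension `τ ++ δ ∈ T`, and the tile with all four edges coloured `(τ, δ)`,
which is also admitted, tiles the plane on its own; for a tree there are no such tiles.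
-/

open Encodable Denumerable Nat.Partrec Nat.Partrec.Code

theorem encode_int_add_one (z : ℤ) :
    encode (z + 1) = if encode z % 2 = 0 then encode z + 2 else encode z - 2 := by
  rcases z with n | (_ | n)
  · change 2 * (n + 1) = if 2 * n % 2 = 0 then 2 * n + 2 else 2 * n - 2
    simp; omega
  · rfl
  · change 2 * n + 1 = if (2 * (n + 1) + 1) % 2 = 0 then _ else 2 * (n + 1) + 1 - 2
    simp only [Nat.mul_add_mod, if_neg (by omega : ¬ (2 * 1 + 1) % 2 = 0)]
    omega

theorem int_neg_iff_encode_odd (z : ℤ) : z < 0 ↔ encode z % 2 = 1 := by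
  rcases z with n | n
  · change (n : ℤ) < 0 ↔ 2 * n % 2 = 1
    omega
  · change Int.negSucc n < 0 ↔ (2 * n + 1) % 2 = 1
    simp only [Int.negSucc_lt_zero, true_iff]
    omega

namespace Primrec

theorem int_add_one : Primrec fun z : ℤ => z + 1 := by
  have hcode : Primrec fun c : ℕ => if c % 2 = 0 then c + 2 else c - 2 :=
    Primrec.ite (Primrec.eq.comp (nat_mod.comp .id (.const 2)) (.const 0))
      (nat_add.comp .id (.const 2)) (nat_sub.comp .id (.const 2))
  refine ((Primrec.ofNat ℤ).comp (hcode.comp Primrec.encode)).of_eq fun z => ?_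
  rw [← encode_int_add_one, ofNat_encode]

theorem int_natCast : Primrec fun n : ℕ => (n : ℤ) :=
  ((Primrec.ofNat ℤ).comp (nat_mul.comp (.const 2) .id)).of_eq fun n => ofNat_encode (n : ℤ)

theorem int_lt_zero : PrimrecPred fun z : ℤ => z < 0 :=
  (Primrec.eq.comp (nat_mod.comp Primrec.encode (.const 2)) (.const 1)).of_eq
    fun z => (int_neg_iff_encode_odd z).symm

end Primrec

theorem PrimrecPred.imp {α : Type*} [Primcodable α] {p q : α → Prop} (hp : PrimrecPred p)
    (hq : PrimrecPred q) : PrimrecPred fun a => p a → q a :=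
  (hp.not.or hq).of_eq fun _ => imp_iff_not_or.symm

namespace Nat.Partrec.Code

theorem exists_forall_mem_evaln_isSome {c : Code} {l : List ℕ} (h : ∀ m ∈ l, (c.eval m).Dom) :
    ∃ s, ∀ m ∈ l, (evaln s c m).isSome := by
  induction l with
  | nil => exact ⟨0, by simp⟩
  | cons a l ih =>
    obtain ⟨s, hs⟩ := ih fun m hm => h m (List.mem_cons_of_mem _ hm)
    obtain ⟨k, hk⟩ := evaln_complete.1 (Part.get_mem (h a List.mem_cons_self))
    refine ⟨max s k, fun m hm => Option.isSome_iff_exists.2 ?_⟩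
    rcases List.mem_cons.1 hm with rfl | hm
    · exact ⟨_, evaln_mono (le_max_right _ _) hk⟩
    · obtain ⟨w, hw⟩ := Option.isSome_iff_exists.1 (hs m hm)
      exact ⟨w, evaln_mono (le_max_left _ _) hw⟩

theorem getD_evaln_mem_eval {s : ℕ} {c : Code} {m : ℕ} (h : (evaln s c m).isSome) :
    (evaln s c m).getD 0 ∈ c.eval m := by
  obtain ⟨w, hw⟩ := Option.isSome_iff_exists.1 h
  rw [hw]
  exact evaln_sound hw

end Nat.Partrec.Code

theorem isTiling_iff {S : Set WangTile} {R : Set (ℤ × ℤ)} {f : ℤ × ℤ → WangTile} :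
    IsTiling S R f ↔ ∀ q ∈ R, f q ∈ S ∧
      ((q.1 + 1, q.2) ∈ R → tileRight (f q) = tileLeft (f (q.1 + 1, q.2))) ∧
      ((q.1, q.2 + 1) ∈ R → tileUp (f q) = tileBottom (f (q.1, q.2 + 1))) :=
  ⟨fun ⟨hS, hH, hV⟩ q hq => ⟨hS q hq, hH q.1 q.2 hq, hV q.1 q.2 hq⟩,
    fun h => ⟨fun q hq => (h q hq).1, fun x y hq => (h (x, y) hq).2.1,
      fun x y hq => (h (x, y) hq).2.2⟩⟩

theorem IsTiling.mono {S : Set WangTile} {R R' : Set (ℤ × ℤ)} {f g : ℤ × ℤ → WangTile}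
    (h : IsTiling S R f) (hR : R' ⊆ R) (hfg : Set.EqOn f g R') : IsTiling S R' g := by
  refine ⟨fun q hq => hfg hq ▸ h.1 q (hR hq), fun x y hq hq' => ?_, fun x y hq hq' => ?_⟩
  · rw [← hfg hq, ← hfg hq']
    exact h.2.1 x y (hR hq) (hR hq')
  · rw [← hfg hq, ← hfg hq']
    exact h.2.2 x y (hR hq) (hR hq')

theorem isTiling_univ_iff_forall {S : Set WangTile} {f : ℤ × ℤ → WangTile}
    {R : ℕ → Set (ℤ × ℤ)} (hR : Monotone R) (hcover : ∀ q, ∃ n, q ∈ R n) :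
    IsTiling S Set.univ f ↔ ∀ n, IsTiling S (R n) f := by
  refine ⟨fun h n => IsTiling.mono h (Set.subset_univ _) (Set.eqOn_refl _ _), fun h => ?_⟩
  have hpair : ∀ q q', ∃ n, q ∈ R n ∧ q' ∈ R n := fun q q' => by
    obtain ⟨n, hn⟩ := hcover q
    obtain ⟨n', hn'⟩ := hcover q'
    exact ⟨max n n', hR (le_max_left _ _) hn, hR (le_max_right _ _) hn'⟩
  refine ⟨fun q _ => ?_, fun x y _ _ => ?_, fun x y _ _ => ?_⟩
  · obtain ⟨n, hn⟩ := hcover q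
    exact (h n).1 q hn
  · obtain ⟨n, hq, hq'⟩ := hpair (x, y) (x + 1, y)
    exact (h n).2.1 x y hq hq'
  · obtain ⟨n, hq, hq'⟩ := hpair (x, y) (x, y + 1)
    exact (h n).2.2 x y hq hq'

theorem eq_add_of_forall_add_one {f : ℤ → ℤ} (h : ∀ x, f (x + 1) = f x + 1) (x : ℤ) :
    f x = f 0 + x := by
  induction x using Int.induction_on with
  | zero => simp
  | succ i ih => rw [h, ih]; ring
  | pred i ih =>
    have := h (-i - 1)
    rw [sub_add_cancel, ih] at this
    linarith

theorem exists_map_range_eq {α : Type*} {L : ℕ → List α} (h0 : L 0 = [])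
    (hsucc : ∀ n, ∃ b, L (n + 1) = L n ++ [b]) : ∃ p : ℕ → α, ∀ n, (List.range n).map p = L n := by
  choose p hp using hsucc
  refine ⟨p, fun n => ?_⟩
  induction n with
  | zero => exact h0.symm
  | succ n ih => rw [List.range_succ, List.map_append, ih, hp]; rfl

theorem exists_eq_append_singleton_iff {σ τ : List ℕ} :
    (∃ b, τ = σ ++ [b]) ↔ τ = σ ++ [τ.reverse.headI] :=
  ⟨fun ⟨b, hb⟩ => by simp [hb], fun h => ⟨_, h⟩⟩

namespace WangTiling

theorem primrec_tileLeft : Primrec tileLeft := Primrec.fst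
theorem primrec_tileUp : Primrec tileUp := Primrec.fst.comp Primrec.snd
theorem primrec_tileRight : Primrec tileRight := Primrec.fst.comp (Primrec.snd.comp Primrec.snd)
theorem primrec_tileBottom : Primrec tileBottom := Primrec.snd.comp (Primrec.snd.comp Primrec.snd)

/-! ### Reductions by finitely many queries -/

def PhiDecides (e : ℕ) (χ : ℕ → Bool) : Prop := ∀ m, Phi e m = Part.some (χ m).toNat

theorem phiTotalBool_iff_exists_phiDecides {e : ℕ} : PhiTotalBool e ↔ ∃ χ, PhiDecides e χ := by
  constructor
  · intro h
    choose v hv hb using h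
    refine ⟨fun m => v m == 1, fun m => Part.eq_some_iff.2 ?_⟩
    rcases hb m with h0 | h1
    · simpa [h0] using hv m
    · simpa [h1] using hv m
  · rintro ⟨χ, hχ⟩ m
    exact ⟨(χ m).toNat, by rw [hχ]; exact Part.mem_some _, by cases χ m <;> simp⟩

theorem PhiDecides.one_mem_iff {e : ℕ} {χ : ℕ → Bool} (h : PhiDecides e χ) (m : ℕ) :
    1 ∈ Phi e m ↔ χ m = true := by
  rw [h, Part.mem_some_iff]
  cases χ m <;> simp

theorem PhiDecides.tSet_eq {e : ℕ} {χ : ℕ → Bool} (h : PhiDecides e χ) :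
    TSet e = {σ | χ (encode σ) = true} :=
  Set.ext fun σ => h.one_mem_iff (encode σ)

theorem PhiDecides.phiTileSet_eq {e : ℕ} {χ : ℕ → Bool} (h : PhiDecides e χ) :
    PhiTileSet e = {t | χ (encode t) = true} :=
  Set.ext fun t => h.one_mem_iff (encode t)

theorem exists_computable_phi_eq {H : ℕ → ℕ →. ℕ} (hH : Partrec₂ H) :
    ∃ g : ℕ → ℕ, Computable g ∧ ∀ e n, Phi (g e) n = H e n := by
  obtain ⟨c, hc⟩ := exists_code.1 (Partrec.nat_iff.1 (hH.comp
    (Primrec.fst.comp Primrec.unpair).to_comp (Primrec.snd.comp Primrec.unpair).to_comp))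
  obtain ⟨f, hf, hfc⟩ := smn
  refine ⟨fun e => encode (f c e), Computable.encode.comp (hf.comp (.const c) .id), fun e n => ?_⟩
  simp [Phi, hfc, hc]

section QueryReduction

variable (Q : ℕ → List ℕ) (R : ℕ → List Bool → Prop)

open Classical in
noncomputable def verdict (n : ℕ) (vs : List ℕ) : ℕ :=
  if ∀ v ∈ vs, v < 2 then (decide (R n (vs.map (· == 1)))).toNat else 2

noncomputable def queryEval (e n : ℕ) : Part ℕ :=
  (Nat.rfind fun s => Part.some (decide (∀ m ∈ Q n, (evaln s (ofNat Code e) m).isSome))).map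
    fun s => verdict R n ((Q n).map fun m => (evaln s (ofNat Code e) m).getD 0)

variable {Q R}

theorem primrec_verdict (hR : PrimrecRel R) : Primrec₂ (verdict R) := by
  classical
  have hbool : PrimrecPred fun p : ℕ × List ℕ => ∀ v ∈ p.2, v < 2 :=
    (PrimrecPred.forall_mem_list (Primrec.nat_lt.comp .id (.const 2))).comp Primrec.snd
  have hacc : PrimrecPred fun p : ℕ × List ℕ => R p.1 (p.2.map (· == 1)) :=
    hR.comp Primrec.fst (Primrec.list_map Primrec.snd (Primrec.beq.comp Primrec.snd (.const 1)))
  exact Primrec.ite hbool ((Primrec.dom_bool Bool.toNat).comp hacc.decide) (.const 2)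

theorem partrec_queryEval (hQ : Primrec Q) (hR : PrimrecRel R) : Partrec₂ (queryEval Q R) := by
  have hrun : Primrec₂ fun (a : (ℕ × ℕ) × ℕ) (m : ℕ) => evaln a.2 (ofNat Code a.1.1) m :=
    primrec_evaln.comp (((Primrec.snd.comp Primrec.fst).pair
      ((Primrec.ofNat Code).comp (Primrec.fst.comp (Primrec.fst.comp Primrec.fst)))).pair
      Primrec.snd)
  have hqueries : Primrec fun a : (ℕ × ℕ) × ℕ => Q a.1.2 :=
    hQ.comp (Primrec.snd.comp Primrec.fst)
  have hhalt : PrimrecRel fun (a : ℕ × ℕ) (s : ℕ) =>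
      ∀ m ∈ Q a.2, (evaln s (ofNat Code a.1) m).isSome :=
    (PrimrecRel.forall_mem_list (R := fun m (a : (ℕ × ℕ) × ℕ) =>
      (evaln a.2 (ofNat Code a.1.1) m).isSome) (Primrec.eq.comp
        (Primrec.option_isSome.comp (hrun.comp Primrec.snd Primrec.fst)) (.const true))).comp
      hqueries .id
  have hval : Primrec₂ fun (a : ℕ × ℕ) (s : ℕ) =>
      verdict R a.2 ((Q a.2).map fun m => (evaln s (ofNat Code a.1) m).getD 0) :=
    (primrec_verdict hR).comp (Primrec.snd.comp Primrec.fst)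
      (Primrec.list_map hqueries (Primrec.option_getD.comp hrun (.const 0)))
  exact (Partrec.rfind (hhalt.decide.to_comp.partrec₂)).map hval.to_comp

theorem exists_stage_of_mem_queryEval {e n v : ℕ} (hv : v ∈ queryEval Q R e n) :
    ∃ s, (∀ m ∈ Q n, (evaln s (ofNat Code e) m).getD 0 ∈ Phi e m) ∧
      v = verdict R n ((Q n).map fun m => (evaln s (ofNat Code e) m).getD 0) := by
  obtain ⟨s, hs, rfl⟩ := (Part.mem_map_iff _).1 hv
  have hhalt := Nat.rfind_spec hs
  simp only [Part.mem_some_iff, true_eq_decide_iff] at hhalt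
  exact ⟨s, fun m hm => getD_evaln_mem_eval (hhalt m hm), rfl⟩

open Classical in
theorem queryEval_eq_of_phiDecides {e : ℕ} {χ : ℕ → Bool} (h : PhiDecides e χ) (n : ℕ) :
    queryEval Q R e n = Part.some (decide (R n ((Q n).map χ))).toNat := by
  obtain ⟨s₀, hs₀⟩ := exists_forall_mem_evaln_isSome (c := ofNat Code e) (l := Q n)
    fun m _ => by
      change (Phi e m).Dom
      rw [h]
      trivial
  have hdom : (queryEval Q R e n).Dom :=
    Nat.rfind_dom.2 ⟨s₀, by simpa using hs₀, fun _ => trivial⟩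
  obtain ⟨s, hvals, hv⟩ := exists_stage_of_mem_queryEval (Part.get_mem hdom)
  have hvals' : (Q n).map (fun m => (evaln s (ofNat Code e) m).getD 0) =
      (Q n).map fun m => (χ m).toNat :=
    List.map_congr_left fun m hm => by simpa [h m] using hvals m hm
  have hbool : ∀ v ∈ (Q n).map fun m => (χ m).toNat, v < 2 := fun v hv => by
    obtain ⟨m, -, rfl⟩ := List.mem_map.1 hv
    exact Bool.toNat_lt _
  have hanswers : ((Q n).map fun m => (χ m).toNat).map (· == 1) = (Q n).map χ := by
    rw [List.map_map]
    exact List.map_congr_left fun m _ => by simp only [Function.comp_apply]; cases χ m <;> rfl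
  rw [← Part.some_get hdom, hv, hvals', verdict, if_pos hbool, hanswers]

theorem queryEval_not_bool {e n m : ℕ} (hm : m ∈ Q n) (h : ¬∃ v ∈ Phi e m, v = 0 ∨ v = 1) :
    ¬∃ v ∈ queryEval Q R e n, v = 0 ∨ v = 1 := by
  rintro ⟨v, hv, hbool⟩
  obtain ⟨s, hvals, rfl⟩ := exists_stage_of_mem_queryEval hv
  have hbad : ¬∀ v ∈ (Q n).map fun m => (evaln s (ofNat Code e) m).getD 0, v < 2 :=
    fun hall => h ⟨_, hvals m hm, by have := hall _ (List.mem_map_of_mem hm); omega⟩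
  rw [verdict, if_neg hbad] at hbool
  omega

open Classical in
theorem exists_query_reduction (hQ : Primrec Q) (hR : PrimrecRel R)
    (hcover : ∀ m, ∃ n, m ∈ Q n) :
    ∃ g : ℕ → ℕ, Computable g ∧ ∀ e, (¬PhiTotalBool e → ¬PhiTotalBool (g e)) ∧
      ∀ χ, PhiDecides e χ → PhiDecides (g e) fun n => decide (R n ((Q n).map χ)) := by
  obtain ⟨g, hg, hphi⟩ := exists_computable_phi_eq (partrec_queryEval hQ hR)
  refine ⟨g, hg, fun e => ⟨fun he hge => ?_, fun χ hχ n => ?_⟩⟩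
  · obtain ⟨m, hm⟩ := not_forall.1 he
    obtain ⟨n, hn⟩ := hcover m
    exact queryEval_not_bool hn hm (hphi e n ▸ hge n)
  · rw [hphi]
    exact queryEval_eq_of_phiDecides hχ n

end QueryReduction

/-! ### The tree of partial tilings -/

def codedTiling (σ : List ℕ) (q : ℤ × ℤ) : WangTile := ofNat WangTile (σ.getD (encode q) 0)

def initialCells (n : ℕ) : Set (ℤ × ℤ) := {q | encode q < n}

@[simp] theorem mem_initialCells {n : ℕ} {q : ℤ × ℤ} : q ∈ initialCells n ↔ encode q < n :=
  Iff.rfl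

theorem forall_mem_initialCells_iff {n : ℕ} {P : ℤ × ℤ → Prop} :
    (∀ q ∈ initialCells n, P q) ↔ ∀ i < n, P (ofNat (ℤ × ℤ) i) :=
  ⟨fun h i hi => h _ (by rwa [mem_initialCells, encode_ofNat]),
    fun h q hq => by simpa only [ofNat_encode] using h _ hq⟩

def partialTilings (S : Set WangTile) : Set (List ℕ) :=
  {σ | IsTiling S (initialCells σ.length) (codedTiling σ)}

theorem codedTiling_eqOn_of_prefix {σ τ : List ℕ} (h : τ <+: σ) :
    Set.EqOn (codedTiling σ) (codedTiling τ) (initialCells τ.length) := by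
  obtain ⟨r, rfl⟩ := h
  intro q hq
  simp only [codedTiling, List.getD_append _ _ _ _ (mem_initialCells.1 hq)]

theorem codedTiling_map_range_eqOn (p : ℕ → ℕ) (n : ℕ) :
    Set.EqOn (codedTiling ((List.range n).map p)) (fun q => ofNat WangTile (p (encode q)))
      (initialCells n) := by
  intro q hq
  simp only [codedTiling]
  rw [List.getD_eq_getElem _ _ (by simpa using hq)]
  simp

theorem isTree_partialTilings (S : Set WangTile) : IsTree (partialTilings S) :=
  fun _ hσ _ hτ => IsTiling.mono hσ (fun _ hq => lt_of_lt_of_le hq hτ.length_le)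
    (codedTiling_eqOn_of_prefix hτ)

theorem illFounded_partialTilings_iff (S : Set WangTile) :
    IllFounded (partialTilings S) ↔ ∃ f, IsTiling S Set.univ f := by
  have hpath : ∀ p : ℕ → ℕ, (∀ n, (List.range n).map p ∈ partialTilings S) ↔
      IsTiling S Set.univ fun q => ofNat WangTile (p (encode q)) := fun p => by
    rw [isTiling_univ_iff_forall (R := initialCells) (fun _ _ h _ hq => lt_of_lt_of_le hq h)
      fun q => ⟨encode q + 1, Nat.lt_succ_self _⟩]
    refine forall_congr' fun n => ?_
    change IsTiling S (initialCells ((List.range n).map p).length) _ ↔ _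
    rw [List.length_map, List.length_range]
    exact ⟨fun h => IsTiling.mono h subset_rfl (codedTiling_map_range_eqOn p n),
      fun h => IsTiling.mono h subset_rfl (codedTiling_map_range_eqOn p n).symm⟩
  refine ⟨fun ⟨p, hp⟩ => ⟨_, (hpath p).1 hp⟩, fun ⟨f, hf⟩ => ⟨fun i => encode (f (ofNat _ i)),
    (hpath _).2 ?_⟩⟩
  simpa only [ofNat_encode] using hf

def MatchesNeighbours (σ : List ℕ) (q : ℤ × ℤ) : Prop :=
  (encode (q.1 + 1, q.2) < σ.length →
    tileRight (codedTiling σ q) = tileLeft (codedTiling σ (q.1 + 1, q.2))) ∧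
  (encode (q.1, q.2 + 1) < σ.length →
    tileUp (codedTiling σ q) = tileBottom (codedTiling σ (q.1, q.2 + 1)))

def AcceptsPartialTiling (σ : List ℕ) (vs : List Bool) : Prop :=
  ∀ i < σ.length, vs.getD i false = true ∧ MatchesNeighbours σ (ofNat (ℤ × ℤ) i)

theorem mem_partialTilings_iff (χ : ℕ → Bool) (σ : List ℕ) :
    σ ∈ partialTilings {t | χ (encode t) = true} ↔ AcceptsPartialTiling σ (σ.map χ) := by
  refine isTiling_iff.trans <| forall_mem_initialCells_iff.trans <|
    forall₂_congr fun i hi => and_congr ?_ Iff.rfl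
  change χ (encode (ofNat WangTile (σ.getD (encode (ofNat (ℤ × ℤ) i)) 0))) = true ↔ _
  rw [encode_ofNat, encode_ofNat, List.getD_eq_getElem _ _ hi,
    List.getD_eq_getElem _ _ (by simpa using hi), List.getElem_map]

theorem primrec_codedTiling : Primrec₂ codedTiling :=
  (Primrec.ofNat WangTile).comp ((Primrec.list_getD 0).comp Primrec.fst
    (Primrec.encode.comp Primrec.snd))

theorem primrecRel_matchesNeighbours : PrimrecRel MatchesNeighbours := by
  have hright : Primrec fun a : List ℕ × (ℤ × ℤ) => (a.2.1 + 1, a.2.2) :=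
    (Primrec.int_add_one.comp (Primrec.fst.comp Primrec.snd)).pair (Primrec.snd.comp Primrec.snd)
  have hup : Primrec fun a : List ℕ × (ℤ × ℤ) => (a.2.1, a.2.2 + 1) :=
    (Primrec.fst.comp Primrec.snd).pair (Primrec.int_add_one.comp (Primrec.snd.comp Primrec.snd))
  have htile : Primrec fun a : List ℕ × (ℤ × ℤ) => codedTiling a.1 a.2 :=
    primrec_codedTiling.comp Primrec.fst Primrec.snd
  have hlen : Primrec fun a : List ℕ × (ℤ × ℤ) => a.1.length :=
    Primrec.list_length.comp Primrec.fst
  exact (PrimrecPred.imp (Primrec.nat_lt.comp (Primrec.encode.comp hright) hlen)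
      (Primrec.eq.comp (primrec_tileRight.comp htile)
        (primrec_tileLeft.comp (primrec_codedTiling.comp Primrec.fst hright)))).and
    (PrimrecPred.imp (Primrec.nat_lt.comp (Primrec.encode.comp hup) hlen)
      (Primrec.eq.comp (primrec_tileUp.comp htile)
        (primrec_tileBottom.comp (primrec_codedTiling.comp Primrec.fst hup))))

theorem primrecRel_acceptsPartialTiling : PrimrecRel AcceptsPartialTiling := by
  have hcell : PrimrecRel fun (i : ℕ) (a : List ℕ × List Bool) =>
      a.2.getD i false = true ∧ MatchesNeighbours a.1 (ofNat (ℤ × ℤ) i) :=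
    (Primrec.eq.comp ((Primrec.list_getD false).comp (Primrec.snd.comp Primrec.snd) Primrec.fst)
      (.const true)).and
      (primrecRel_matchesNeighbours.comp (Primrec.fst.comp Primrec.snd)
        ((Primrec.ofNat _).comp Primrec.fst))
  exact (hcell.forall_mem_list.comp
    (Primrec.list_range.comp (Primrec.list_length.comp Primrec.fst)) .id).of_eq
    fun a => by simp [AcceptsPartialTiling]

theorem ntile_manyOneReducible_well : (· ∈ NTILE) ≤₀ (· ∈ WELL) := by
  obtain ⟨g, hg, hg'⟩ := exists_query_reduction (Primrec.ofNat (List ℕ))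
    (primrecRel_acceptsPartialTiling.comp₂ ((Primrec.ofNat (List ℕ)).comp₂ Primrec₂.left)
      Primrec₂.right) fun m => ⟨encode [m], by simp⟩
  refine ⟨g, hg, fun e => ?_⟩
  by_cases he : PhiTotalBool e
  · obtain ⟨χ, hχ⟩ := phiTotalBool_iff_exists_phiDecides.1 he
    have hge := (hg' e).2 χ hχ
    have hT : TSet (g e) = partialTilings (PhiTileSet e) := by
      ext σ
      rw [hge.tSet_eq, hχ.phiTileSet_eq, mem_partialTilings_iff]
      simp only [Set.mem_ofPred_eq, ofNat_encode, decide_eq_true_eq]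
    simp only [NTILE, WELL, Set.mem_ofPred_eq, he, phiTotalBool_iff_exists_phiDecides.2 ⟨_, hge⟩,
      hT, isTree_partialTilings, illFounded_partialTilings_iff, true_and]
  · exact iff_of_false (fun h => he h.1) fun h => (hg' e).1 he h.1

/-! ### Tiles that follow a path through a tree -/

abbrev Colour : Type := (ℤ × List ℕ) ⊕ (List ℕ × List ℕ)

def pathTile (s s' : ℤ × List ℕ) : WangTile :=
  (encode (.inl s : Colour), encode (.inl s : Colour), encode (.inl s' : Colour),
    encode (.inl s : Colour))

def fillTile (τ δ : List ℕ) : WangTile :=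
  (encode (.inr (τ, δ) : Colour), encode (.inr (τ, δ) : Colour), encode (.inr (τ, δ) : Colour),
    encode (.inr (τ, δ) : Colour))

def CounterStep (s s' : ℤ × List ℕ) : Prop :=
  s'.1 = s.1 + 1 ∧
    ((s.1 < 0 ∧ s.2 = [] ∧ s'.2 = []) ∨ ((s.2.length : ℤ) = s.1 ∧ ∃ b, s'.2 = s.2 ++ [b]))

def treeTiles (T : Set (List ℕ)) : Set WangTile :=
  {t | ∃ s s', CounterStep s s' ∧ s'.2 ∈ T ∧ t = pathTile s s'} ∪
    {t | ∃ τ δ, τ ∉ T ∧ τ ++ δ ∈ T ∧ t = fillTile τ δ}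

def IsCounterRow (T : Set (List ℕ)) (row : ℤ → ℤ × List ℕ) : Prop :=
  ∀ x, CounterStep (row x) (row (x + 1)) ∧ (row (x + 1)).2 ∈ T

theorem exists_tiling_treeTiles_of_not_isTree {T : Set (List ℕ)} (hT : ¬IsTree T) :
    ∃ f, IsTiling (treeTiles T) Set.univ f := by
  obtain ⟨σ, hσ, τ, ⟨δ, rfl⟩, hτ⟩ : ∃ σ ∈ T, ∃ τ, τ <+: σ ∧ τ ∉ T := by
    simpa [IsTree] using hT
  exact ⟨fun _ => fillTile τ δ, fun _ _ => Or.inr ⟨τ, δ, hτ, hσ, rfl⟩, fun _ _ _ _ => rfl,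
    fun _ _ _ _ => rfl⟩

theorem exists_tiling_treeTiles_iff {T : Set (List ℕ)} (hT : IsTree T) :
    (∃ f, IsTiling (treeTiles T) Set.univ f) ↔ ∃ row, IsCounterRow T row := by
  constructor
  · rintro ⟨f, hS, hH, -⟩
    have hpath : ∀ x, ∃ s s', CounterStep s s' ∧ s'.2 ∈ T ∧ f (x, 0) = pathTile s s' := by
      intro x
      rcases hS (x, 0) trivial with h | ⟨τ, δ, hτ, hτδ, -⟩
      · exact h
      · exact absurd (hT _ hτδ τ (List.prefix_append τ δ)) hτ
    choose s s' hstep hmem hf using hpath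
    have hnext : ∀ x, s' x = s (x + 1) := fun x => by
      have h := hH x 0 trivial trivial
      rw [hf, hf] at h
      exact Sum.inl_injective (encode_injective h)
    exact ⟨s, fun x => hnext x ▸ ⟨hstep x, hmem x⟩⟩
  · rintro ⟨row, hrow⟩
    exact ⟨fun q => pathTile (row q.1) (row (q.1 + 1)),
      fun q _ => Or.inl ⟨_, _, (hrow q.1).1, (hrow q.1).2, rfl⟩, fun _ _ _ _ => rfl,
      fun _ _ _ _ => rfl⟩

theorem exists_isCounterRow_iff {T : Set (List ℕ)} (hT : IsTree T) :
    (∃ row, IsCounterRow T row) ↔ IllFounded T := by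
  constructor
  · rintro ⟨row, hrow⟩
    have hz := eq_add_of_forall_add_one (f := fun x => (row x).1) fun x => (hrow x).1.1
    set L : ℕ → List ℕ := fun n => (row (n - (row 0).1)).2
    have hL : ∀ n : ℕ, (L n).length = n ∧ ∃ b, L (n + 1) = L n ++ [b] := fun n => by
      have hzn : (row (n - (row 0).1)).1 = n := by rw [hz]; ring
      rcases (hrow (n - (row 0).1)).1.2 with ⟨hneg, -⟩ | ⟨hlen, hext⟩
      · omega
      · refine ⟨by exact_mod_cast hlen.trans hzn, ?_⟩
        simpa only [L, Nat.cast_succ, sub_add_eq_add_sub] using hext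
    have hmem : ∀ n, L (n + 1) ∈ T := fun n => by
      simpa only [L, Nat.cast_succ, sub_add_eq_add_sub] using (hrow (n - (row 0).1)).2
    obtain ⟨p, hp⟩ := exists_map_range_eq (List.length_eq_zero_iff.1 (hL 0).1) fun n => (hL n).2
    refine ⟨p, fun n => ?_⟩
    obtain ⟨b, hb⟩ := (hL n).2
    exact hp n ▸ hT _ (hmem n) _ (hb ▸ List.prefix_append _ _)
  · rintro ⟨p, hp⟩
    refine ⟨fun x => (x, (List.range x.toNat).map p), fun x => ⟨⟨rfl, ?_⟩, hp _⟩⟩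
    rcases lt_or_ge x 0 with hx | hx
    · exact Or.inl ⟨hx, by simp [Int.toNat_of_nonpos hx.le],
        by simp [Int.toNat_of_nonpos (by omega : x + 1 ≤ 0)]⟩
    · refine Or.inr ⟨by simp [hx], p x.toNat, ?_⟩
      change (List.range (x + 1).toNat).map p = (List.range x.toNat).map p ++ [p x.toNat]
      rw [show (x + 1).toNat = x.toNat + 1 by omega, List.range_succ, List.map_append]
      rfl

def pathStateOf (c : ℕ) : ℤ × List ℕ := (ofNat Colour c).elim id fun _ => (0, [])

def fillStateOf (c : ℕ) : List ℕ × List ℕ := (ofNat Colour c).elim (fun _ => ([], [])) id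

theorem pathStateOf_encode (s : ℤ × List ℕ) : pathStateOf (encode (.inl s : Colour)) = s := by
  rw [pathStateOf, ofNat_encode]
  rfl

theorem fillStateOf_encode (τ δ : List ℕ) :
    fillStateOf (encode (.inr (τ, δ) : Colour)) = (τ, δ) := by
  rw [fillStateOf, ofNat_encode]
  rfl

def treeTileQueries (t : WangTile) : List ℕ :=
  [encode (pathStateOf (tileRight t)).2, encode (fillStateOf (tileLeft t)).1,
    encode ((fillStateOf (tileLeft t)).1 ++ (fillStateOf (tileLeft t)).2)]

def AcceptsTreeTile (t : WangTile) (vs : List Bool) : Prop :=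
  (t = pathTile (pathStateOf (tileLeft t)) (pathStateOf (tileRight t)) ∧
      CounterStep (pathStateOf (tileLeft t)) (pathStateOf (tileRight t)) ∧
      vs.getD 0 false = true) ∨
    (t = fillTile (fillStateOf (tileLeft t)).1 (fillStateOf (tileLeft t)).2 ∧
      vs.getD 1 false = false ∧ vs.getD 2 false = true)

theorem mem_treeTiles_iff (χ : ℕ → Bool) (t : WangTile) :
    t ∈ treeTiles {σ | χ (encode σ) = true} ↔ AcceptsTreeTile t ((treeTileQueries t).map χ) := by
  simp only [treeTiles, AcceptsTreeTile, treeTileQueries, Set.mem_union, Set.mem_ofPred_eq,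
    List.map_cons, List.map_nil, List.getD_cons_zero, List.getD_cons_succ, Bool.not_eq_true]
  refine or_congr ⟨?_, fun ⟨ht, hstep, hmem⟩ => ⟨_, _, hstep, hmem, ht⟩⟩
    ⟨?_, fun ⟨ht, hτ, hmem⟩ => ⟨_, _, hτ, hmem, ht⟩⟩
  · rintro ⟨s, s', hstep, hmem, rfl⟩
    have hleft : pathStateOf (tileLeft (pathTile s s')) = s := pathStateOf_encode s
    have hright : pathStateOf (tileRight (pathTile s s')) = s' := pathStateOf_encode s'
    rw [hleft, hright]
    exact ⟨rfl, hstep, hmem⟩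
  · rintro ⟨τ, δ, hτ, hmem, rfl⟩
    have hleft : fillStateOf (tileLeft (fillTile τ δ)) = (τ, δ) := fillStateOf_encode τ δ
    rw [hleft]
    exact ⟨rfl, hτ, hmem⟩

theorem exists_mem_treeTileQueries (m : ℕ) : ∃ t, m ∈ treeTileQueries t :=
  ⟨pathTile (0, []) (0, ofNat (List ℕ) m), List.mem_cons.2 <| Or.inl <| by
    rw [tileRight, pathTile, pathStateOf_encode, encode_ofNat]⟩

theorem primrec_pathStateOf : Primrec pathStateOf :=
  (Primrec.sumCasesOn (Primrec.ofNat Colour) Primrec₂.right (Primrec.const (0, [])).to₂).of_eq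
    fun c => by unfold pathStateOf; cases ofNat Colour c <;> rfl

theorem primrec_fillStateOf : Primrec fillStateOf :=
  (Primrec.sumCasesOn (Primrec.ofNat Colour) (Primrec.const ([], [])).to₂ Primrec₂.right).of_eq
    fun c => by unfold fillStateOf; cases ofNat Colour c <;> rfl

theorem primrec_pathTile : Primrec₂ pathTile := by
  have hc : Primrec fun s : ℤ × List ℕ => encode (.inl s : Colour) :=
    Primrec.encode.comp Primrec.sumInl
  exact (hc.comp Primrec.fst).pair ((hc.comp Primrec.fst).pair
    ((hc.comp Primrec.snd).pair (hc.comp Primrec.fst)))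

theorem primrec_fillTile : Primrec₂ fillTile := by
  have hc : Primrec₂ fun τ δ : List ℕ => encode (.inr (τ, δ) : Colour) :=
    Primrec.encode.comp (Primrec.sumInr.comp (Primrec.fst.pair Primrec.snd))
  exact Primrec.pair hc (Primrec.pair hc (Primrec.pair hc hc))

theorem primrecRel_counterStep : PrimrecRel CounterStep := by
  have hz : Primrec fun a : (ℤ × List ℕ) × (ℤ × List ℕ) => a.1.1 := Primrec.fst.comp Primrec.fst
  have hσ : Primrec fun a : (ℤ × List ℕ) × (ℤ × List ℕ) => a.1.2 := Primrec.snd.comp Primrec.fst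
  have hτ : Primrec fun a : (ℤ × List ℕ) × (ℤ × List ℕ) => a.2.2 := Primrec.snd.comp Primrec.snd
  have hnil : ∀ {f : (ℤ × List ℕ) × (ℤ × List ℕ) → List ℕ}, Primrec f →
      PrimrecPred fun a => f a = [] := fun hf => Primrec.eq.comp hf (.const [])
  refine ((Primrec.eq.comp (Primrec.fst.comp Primrec.snd) (Primrec.int_add_one.comp hz)).and
    (((Primrec.int_lt_zero.comp hz).and ((hnil hσ).and (hnil hτ))).or
      ((Primrec.eq.comp (Primrec.int_natCast.comp (Primrec.list_length.comp hσ)) hz).and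
        (Primrec.eq.comp hτ (Primrec.list_append.comp hσ (Primrec.list_cons.comp
          (Primrec.list_headI.comp (Primrec.list_reverse.comp hτ)) (.const []))))))).of_eq
    fun a => ?_
  simp only [CounterStep, exists_eq_append_singleton_iff]

theorem primrec_treeTileQueries : Primrec treeTileQueries := by
  have hfill : Primrec fun t : WangTile => fillStateOf (tileLeft t) :=
    primrec_fillStateOf.comp primrec_tileLeft
  exact Primrec.list_cons.comp (Primrec.encode.comp (Primrec.snd.comp
    (primrec_pathStateOf.comp primrec_tileRight))) (Primrec.list_cons.comp
      (Primrec.encode.comp (Primrec.fst.comp hfill)) (Primrec.list_cons.comp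
        (Primrec.encode.comp (Primrec.list_append.comp (Primrec.fst.comp hfill)
          (Primrec.snd.comp hfill))) (.const [])))

theorem primrecRel_acceptsTreeTile : PrimrecRel AcceptsTreeTile := by
  have ht : Primrec fun a : WangTile × List Bool => a.1 := Primrec.fst
  have hs : Primrec fun a : WangTile × List Bool => pathStateOf (tileLeft a.1) :=
    primrec_pathStateOf.comp (primrec_tileLeft.comp ht)
  have hs' : Primrec fun a : WangTile × List Bool => pathStateOf (tileRight a.1) :=
    primrec_pathStateOf.comp (primrec_tileRight.comp ht)
  have hfill : Primrec fun a : WangTile × List Bool => fillStateOf (tileLeft a.1) :=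
    primrec_fillStateOf.comp (primrec_tileLeft.comp ht)
  have hans : ∀ (i : ℕ) (b : Bool), PrimrecPred fun a : WangTile × List Bool =>
      a.2.getD i false = b := fun i b =>
    Primrec.eq.comp ((Primrec.list_getD false).comp Primrec.snd (.const i)) (.const b)
  exact ((Primrec.eq.comp ht (primrec_pathTile.comp hs hs')).and
      ((primrecRel_counterStep.comp hs hs').and (hans 0 true))).or
    ((Primrec.eq.comp ht (primrec_fillTile.comp (Primrec.fst.comp hfill)
      (Primrec.snd.comp hfill))).and ((hans 1 false).and (hans 2 true)))

theorem well_manyOneReducible_ntile : (· ∈ WELL) ≤₀ (· ∈ NTILE) := by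
  obtain ⟨g, hg, hg'⟩ := exists_query_reduction
    (primrec_treeTileQueries.comp (Primrec.ofNat WangTile))
    (primrecRel_acceptsTreeTile.comp₂ ((Primrec.ofNat WangTile).comp₂ Primrec₂.left)
      Primrec₂.right) fun m =>
        let ⟨t, ht⟩ := exists_mem_treeTileQueries m
        ⟨encode t, by rwa [ofNat_encode]⟩
  refine ⟨g, hg, fun e => ?_⟩
  by_cases he : PhiTotalBool e
  · obtain ⟨χ, hχ⟩ := phiTotalBool_iff_exists_phiDecides.1 he
    have hge := (hg' e).2 χ hχ
    have hge' : PhiTotalBool (g e) := phiTotalBool_iff_exists_phiDecides.2 ⟨_, hge⟩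
    have hS : PhiTileSet (g e) = treeTiles (TSet e) := by
      ext t
      rw [hge.phiTileSet_eq, hχ.tSet_eq, mem_treeTiles_iff]
      simp only [Set.mem_ofPred_eq, ofNat_encode, decide_eq_true_eq]
    by_cases hT : IsTree (TSet e)
    · simp only [WELL, NTILE, Set.mem_ofPred_eq, he, hge', hT, hS, exists_tiling_treeTiles_iff hT,
        exists_isCounterRow_iff hT, true_and]
    · simp only [WELL, NTILE, Set.mem_ofPred_eq, hT, hS, exists_tiling_treeTiles_of_not_isTree hT,
        false_and, and_false, not_true]
  · exact iff_of_false (fun h => he h.1) fun h => (hg' e).1 he h.1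

end WangTiling

/-- `(¬TILE) ≡_m WELL`. -/
theorem NTILE_manyOneEquiv_WELL :
    (· ∈ NTILE) ≤₀ (· ∈ WELL) ∧ (· ∈ WELL) ≤₀ (· ∈ NTILE) :=
  ⟨WangTiling.ntile_manyOneReducible_well, WangTiling.well_manyOneReducible_ntile⟩
end

section
/- WELL ≤_m PTile. -/
/-- A total tiling is periodic if it is invariant under some nonzero translation. -/
def IsPeriodic (f : ℤ × ℤ → WangTile) : Prop :=
  ∃ v : ℤ × ℤ, v ≠ 0 ∧ ∀ p : ℤ × ℤ, f (p + v) = f p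

def PTile : Set ℕ :=
  {e | PhiTotalBool e ∧ (∃ f : ℤ × ℤ → WangTile, IsTiling (PhiTileSet e) Set.univ f) ∧
    ∀ f : ℤ × ℤ → WangTile, IsTiling (PhiTileSet e) Set.univ f → IsPeriodic f}

/-!
From an index `e` of a set `T` of sequences we compute an index of the following tile set: a
blank tile; for every `ρ ∈ T` whose parent `ρ.dropLast` is not in `T`, counter tiles; and for
every nonempty `ρ ∈ T`, path tiles with top colour `ρ` and bottom colour its parent. The
left/right colours of counter and path tiles count through `ℤ`, so no row of them is periodic. A
column of path tiles spells out an infinite branch of `T`, and when `T` is not a tree the counter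
tiles alone tile the plane. So the constant blank tiling always exists, and every tiling is
periodic iff `T` is a well-founded tree. Each tile is decided by two queries to `φ_e`.
-/

open Encodable Denumerable

theorem Primrec.list_dropLast {α : Type*} [Primcodable α] : Primrec (@List.dropLast α) :=
  (Primrec.list_take.comp (Primrec.nat_sub.comp Primrec.list_length (Primrec.const 1))
    Primrec.id).of_eq fun _ => List.dropLast_eq_take.symm

theorem partrec₂_phi : Partrec₂ Phi :=
  Nat.Partrec.Code.eval_part.comp ((Primrec.ofNat Nat.Partrec.Code).to_comp.comp Computable.fst)
    Computable.snd

theorem Computable.bool_toNat : Computable Bool.toNat :=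
  (Primrec.cond Primrec.id (Primrec.const 1) (Primrec.const 0)).to_comp.of_eq fun b => by
    cases b <;> rfl

theorem exists_computable_phi_eq {F : ℕ → ℕ →. ℕ} (hF : Partrec₂ F) :
    ∃ g : ℕ → ℕ, Computable g ∧ ∀ e, Phi (g e) = F e := by
  obtain ⟨c, hc⟩ := Nat.Partrec.Code.exists_code.mp
    (Partrec.nat_iff.mp (hF.comp (Computable.fst.comp Computable.unpair)
      (Computable.snd.comp Computable.unpair)))
  refine ⟨fun e => encode (c.curry e), (Primrec.encode.comp
    (Nat.Partrec.Code.primrec₂_curry.comp (Primrec.const c) Primrec.id)).to_comp, fun e => ?_⟩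
  ext1 m
  simp [Phi, Nat.Partrec.Code.eval_curry, hc]

theorem PhiTotalBool.exists_eq_some {e : ℕ} (he : PhiTotalBool e) (m : ℕ) :
    ∃ b : Bool, Phi e m = Part.some b.toNat := by
  obtain ⟨v, hv, rfl | rfl⟩ := he m
  exacts [⟨false, Part.eq_some_iff.mpr hv⟩, ⟨true, Part.eq_some_iff.mpr hv⟩]

theorem one_mem_some_toNat_iff (b : Bool) : 1 ∈ Part.some b.toNat ↔ b = true := by
  cases b <;> simp

section TruthTable

variable {α β : Type*} [Denumerable α] [Primcodable β] {q₁ q₂ : α → β} {c : α → Bool → Bool → Bool}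

variable (q₁ q₂ c) in
/-- Querying `φ_e` at the input itself, and diverging unless the answer is `0` or `1`, makes this
total and `{0,1}`-valued only if `φ_e` is. -/
def truthTablePhi (e m : ℕ) : Part ℕ :=
  (Phi e m).bind fun v => if v ≤ 1 then
    (Phi e (encode (q₁ (ofNat α m)))).bind fun v₁ =>
      (Phi e (encode (q₂ (ofNat α m)))).map fun v₂ => (c (ofNat α m) (v₁ == 1) (v₂ == 1)).toNat
  else Part.none

theorem partrec₂_truthTablePhi (hq₁ : Computable q₁) (hq₂ : Computable q₂)
    (hc : Computable fun x : α × Bool × Bool => c x.1 x.2.1 x.2.2) :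
    Partrec₂ (truthTablePhi q₁ q₂ c) := by
  have hm : Computable fun p : ℕ × ℕ => ofNat α p.2 := (Primrec.ofNat α).to_comp.comp .snd
  have hanswer : Partrec fun p : ℕ × ℕ => (Phi p.1 (encode (q₁ (ofNat α p.2)))).bind fun v₁ =>
      (Phi p.1 (encode (q₂ (ofNat α p.2)))).map fun v₂ =>
        (c (ofNat α p.2) (v₁ == 1) (v₂ == 1)).toNat :=
    Partrec.bind (partrec₂_phi.comp .fst (Computable.encode.comp (hq₁.comp hm)))
      (Partrec.map (partrec₂_phi.comp (Computable.fst.comp .fst)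
          (Computable.encode.comp (hq₂.comp (hm.comp .fst))))
        (Computable.bool_toNat.comp (hc.comp (.pair (hm.comp (Computable.fst.comp .fst))
          (.pair (Primrec.beq.to_comp.comp (Computable.snd.comp .fst) (.const 1))
            (Primrec.beq.to_comp.comp .snd (.const 1)))))))
  exact Partrec.bind partrec₂_phi ((Partrec.cond
    (Primrec.nat_le.decide.to_comp.comp Computable.snd (Computable.const 1))
    (hanswer.comp Computable.fst) Partrec.none).of_eq fun _ => Bool.cond_decide _ _ _)

theorem truthTablePhi_encode {e : ℕ} (he : PhiTotalBool e) {a : α} {b₁ b₂ : Bool}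
    (h₁ : Phi e (encode (q₁ a)) = Part.some b₁.toNat)
    (h₂ : Phi e (encode (q₂ a)) = Part.some b₂.toNat) :
    truthTablePhi q₁ q₂ c e (encode a) = Part.some (c a b₁ b₂).toNat := by
  obtain ⟨b, hb⟩ := he.exists_eq_some (encode a)
  simp [truthTablePhi, hb, Bool.toNat_le, h₁, h₂]

theorem truthTablePhi_totalBool_iff {e : ℕ} :
    (∀ m, ∃ v, v ∈ truthTablePhi q₁ q₂ c e m ∧ (v = 0 ∨ v = 1)) ↔ PhiTotalBool e := by
  refine ⟨fun h m => ?_, fun he m => ?_⟩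
  · obtain ⟨w, hw, -⟩ := h m
    obtain ⟨v, hv, hw⟩ := Part.mem_bind_iff.mp hw
    split_ifs at hw
    · exact ⟨v, hv, by omega⟩
    · exact absurd hw (Part.notMem_none w)
  · obtain ⟨b₁, h₁⟩ := he.exists_eq_some (encode (q₁ (ofNat α m)))
    obtain ⟨b₂, h₂⟩ := he.exists_eq_some (encode (q₂ (ofNat α m)))
    have h := truthTablePhi_encode (c := c) he h₁ h₂
    rw [encode_ofNat] at h
    exact ⟨_, h ▸ Part.mem_some _,
      Nat.le_one_iff_eq_zero_or_eq_one.mp (Bool.toNat_le (c (ofNat α m) b₁ b₂))⟩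

end TruthTable

theorem isTree_of_dropLast_mem {T : Set (List ℕ)} (hT : ∀ ρ ∈ T, ρ.dropLast ∈ T) : IsTree T := by
  rintro σ hσ τ ⟨r, rfl⟩
  induction r using List.reverseRecOn with
  | nil => simpa using hσ
  | append_singleton r k ih =>
    exact ih (by simpa [← List.append_assoc] using hT _ hσ)

theorem illFounded_of_dropLast_chain {T : Set (List ℕ)} (hT : IsTree T) {ρ : ℕ → List ℕ}
    (hmem : ∀ m, ρ m ∈ T) (hne : ∀ m, ρ (m + 1) ≠ []) (hparent : ∀ m, (ρ (m + 1)).dropLast = ρ m) :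
    IllFounded T := by
  have hprefix : ∀ m, ρ m <+: ρ (m + 1) := fun m => hparent m ▸ List.dropLast_prefix _
  have hlen : ∀ m, m ≤ (ρ m).length := by
    intro m
    induction m with
    | zero => exact Nat.zero_le _
    | succ m ih =>
      have := List.length_pos_iff.mpr (hne m)
      have := congrArg List.length (hparent m)
      rw [List.length_dropLast] at this
      omega
  refine ⟨fun i => (ρ (i + 1)).getD i 0, fun n => hT _ (hmem n) _ ?_⟩
  suffices h : (List.range n).map (fun i => (ρ (i + 1)).getD i 0) = (ρ n).take n from
    h ▸ List.take_prefix _ _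
  induction n with
  | zero => simp
  | succ n ih =>
    have htake : (ρ n).take n = (ρ (n + 1)).take n := by
      rw [List.prefix_iff_eq_take.mp (hprefix n), List.take_take, min_eq_left (hlen n)]
    have hn : n < (ρ (n + 1)).length := hlen (n + 1)
    rw [List.range_succ, List.map_append, ih, htake, List.take_add_one]
    simp [List.getElem?_eq_getElem hn]

section Tiling

variable {S : Set WangTile} {f : ℤ × ℤ → WangTile}

theorem IsTiling.mem_univ (hf : IsTiling S Set.univ f) (p : ℤ × ℤ) : f p ∈ S :=
  hf.1 p trivial

theorem IsTiling.up_eq_bottom (hf : IsTiling S Set.univ f) (x y : ℤ) :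
    tileUp (f (x, y)) = tileBottom (f (x, y + 1)) :=
  hf.2.2 x y trivial trivial

end Tiling

theorem isPeriodic_const (t : WangTile) : IsPeriodic fun _ => t :=
  ⟨(1, 0), by simp, fun _ => rfl⟩

namespace TreeTiling

def intCode (z : ℤ) : ℕ := if 0 ≤ z then 2 * z.toNat else 2 * (-z).toNat - 1

def intCodeSucc (a : ℕ) : ℕ := if a % 2 = 0 then a + 2 else if a = 1 then 0 else a - 2

theorem intCodeSucc_intCode (z : ℤ) : intCodeSucc (intCode z) = intCode (z + 1) := by
  unfold intCodeSucc intCode; split_ifs <;> omega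

theorem intCode_injective : Function.Injective intCode := by
  intro a b h; unfold intCode at h; split_ifs at h <;> omega

theorem primrec_intCodeSucc : Primrec intCodeSucc :=
  Primrec.ite (Primrec.eq.comp (Primrec.nat_mod.comp .id (.const 2)) (.const 0))
    (Primrec.nat_add.comp .id (.const 2))
    (Primrec.ite (Primrec.eq.comp .id (.const 1)) (.const 0) (Primrec.nat_sub.comp .id (.const 2)))

def blank : WangTile := (0, encode ([] : List ℕ), 0, encode ([] : List ℕ))

def counterTile (ρ : List ℕ) (a : ℕ) : WangTile := (a, encode ρ, intCodeSucc a, encode ρ)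

def pathTile (ρ : List ℕ) (a : ℕ) : WangTile := (a, encode ρ, intCodeSucc a, encode ρ.dropLast)

inductive TreeTile (T : Set (List ℕ)) : WangTile → Prop
  | blank : TreeTile T blank
  | counter {ρ : List ℕ} (a : ℕ) : ρ ∈ T → ρ.dropLast ∉ T → TreeTile T (counterTile ρ a)
  | path {ρ : List ℕ} (a : ℕ) : ρ ≠ [] → ρ ∈ T → TreeTile T (pathTile ρ a)

def topList (t : WangTile) : List ℕ := ofNat (List ℕ) (tileUp t)

def accepts (t : WangTile) (b₁ b₂ : Bool) : Bool :=
  decide (t = blank) || (decide (t = counterTile (topList t) (tileLeft t)) && b₁ && !b₂) ||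
    (decide (t = pathTile (topList t) (tileLeft t)) && decide (topList t ≠ []) && b₁)

@[simp] theorem topList_counterTile (ρ : List ℕ) (a : ℕ) : topList (counterTile ρ a) = ρ :=
  ofNat_encode ρ

@[simp] theorem topList_pathTile (ρ : List ℕ) (a : ℕ) : topList (pathTile ρ a) = ρ :=
  ofNat_encode ρ

@[simp] theorem topList_blank : topList blank = [] :=
  ofNat_encode _

@[simp] theorem tileLeft_counterTile (ρ : List ℕ) (a : ℕ) : tileLeft (counterTile ρ a) = a := rfl

@[simp] theorem tileLeft_pathTile (ρ : List ℕ) (a : ℕ) : tileLeft (pathTile ρ a) = a := rfl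

theorem treeTile_iff_accepts {T : Set (List ℕ)} {t : WangTile} {b₁ b₂ : Bool}
    (h₁ : topList t ∈ T ↔ b₁ = true) (h₂ : (topList t).dropLast ∈ T ↔ b₂ = true) :
    TreeTile T t ↔ accepts t b₁ b₂ = true := by
  constructor
  · rintro (_ | @⟨ρ, a, hρ, hρ'⟩ | @⟨ρ, a, hne, hρ⟩)
    · simp [accepts]
    · rw [topList_counterTile] at h₁ h₂
      simp [accepts, h₁.mp hρ, Bool.eq_false_iff.mpr (mt h₂.mpr hρ')]
    · rw [topList_pathTile] at h₁
      simp [accepts, h₁.mp hρ, hne]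
  · intro h
    simp only [accepts, Bool.or_eq_true, Bool.and_eq_true, decide_eq_true_eq,
      Bool.not_eq_true'] at h
    rcases h with (h | ⟨⟨h, hb₁⟩, hb₂⟩) | ⟨⟨h, hne⟩, hb₁⟩ <;> rw [h]
    · exact .blank
    · exact .counter _ (h₁.mpr hb₁) (by simp [h₂, hb₂])
    · exact .path _ hne (h₁.mpr hb₁)

theorem primrec_topList : Primrec topList :=
  (Primrec.ofNat _).comp (Primrec.fst.comp .snd)

theorem primrec_counterTile : Primrec₂ counterTile :=
  Primrec.pair .snd (.pair (Primrec.encode.comp .fst)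
    (.pair (primrec_intCodeSucc.comp .snd) (Primrec.encode.comp .fst)))

theorem primrec_pathTile : Primrec₂ pathTile :=
  Primrec.pair .snd (.pair (Primrec.encode.comp .fst)
    (.pair (primrec_intCodeSucc.comp .snd) (Primrec.encode.comp (Primrec.list_dropLast.comp .fst))))

theorem primrec_accepts : Primrec fun x : WangTile × Bool × Bool => accepts x.1 x.2.1 x.2.2 := by
  have ht : Primrec fun x : WangTile × Bool × Bool => x.1 := .fst
  have hρ := primrec_topList.comp ht
  have ha : Primrec fun x : WangTile × Bool × Bool => tileLeft x.1 := Primrec.fst.comp ht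
  have hb₁ : Primrec fun x : WangTile × Bool × Bool => x.2.1 := Primrec.fst.comp .snd
  exact Primrec.or.comp
    (Primrec.or.comp (Primrec.eq.decide.comp ht (.const blank))
      (Primrec.and.comp (Primrec.and.comp
          (Primrec.eq.decide.comp ht (primrec_counterTile.comp hρ ha)) hb₁)
        (Primrec.not.comp (Primrec.snd.comp .snd))))
    (Primrec.and.comp (Primrec.and.comp (Primrec.eq.decide.comp ht (primrec_pathTile.comp hρ ha))
      (Primrec.eq.not.decide.comp hρ (.const []))) hb₁)

theorem exists_computable_phiTileSet_eq : ∃ g : ℕ → ℕ, Computable g ∧ ∀ e,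
    (PhiTotalBool (g e) ↔ PhiTotalBool e) ∧
      (PhiTotalBool e → PhiTileSet (g e) = {t | TreeTile (TSet e) t}) := by
  obtain ⟨g, hg, hgΦ⟩ := exists_computable_phi_eq (partrec₂_truthTablePhi primrec_topList.to_comp
    (Primrec.list_dropLast.comp primrec_topList).to_comp primrec_accepts.to_comp)
  refine ⟨g, hg, fun e => ⟨by simpa only [PhiTotalBool, hgΦ] using truthTablePhi_totalBool_iff,
    fun he => Set.ext fun t => ?_⟩⟩
  obtain ⟨b₁, h₁⟩ := he.exists_eq_some (encode (topList t))
  obtain ⟨b₂, h₂⟩ := he.exists_eq_some (encode (topList t).dropLast)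
  have hmem {σ : List ℕ} {b : Bool} (h : Phi e (encode σ) = Part.some b.toNat) :
      σ ∈ TSet e ↔ b = true := by
    show 1 ∈ Phi e (encode σ) ↔ _
    rw [h, one_mem_some_toNat_iff]
  show 1 ∈ Phi (g e) (encode t) ↔ TreeTile (TSet e) t
  rw [hgΦ, truthTablePhi_encode he h₁ h₂, one_mem_some_toNat_iff,
    treeTile_iff_accepts (hmem h₁) (hmem h₂)]

section Tilings

variable {T : Set (List ℕ)} {f : ℤ × ℤ → WangTile}

theorem isTiling_const_blank : IsTiling {t | TreeTile T t} Set.univ fun _ => blank :=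
  ⟨fun _ _ => .blank, fun _ _ _ _ => rfl, fun _ _ _ _ => rfl⟩

theorem exists_pathTile_above (hT : IsTree T) (hf : IsTiling {t | TreeTile T t} Set.univ f)
    {x y : ℤ} {ρ : List ℕ} {a : ℕ} (hρ : ρ ≠ []) (h : f (x, y) = pathTile ρ a) :
    ∃ ρ' a', f (x, y + 1) = pathTile ρ' a' ∧ ρ' ≠ [] ∧ ρ' ∈ T ∧ ρ'.dropLast = ρ := by
  have hup := hf.up_eq_bottom x y
  have habove := hf.mem_univ (x, y + 1)
  generalize f (x, y + 1) = t at hup habove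
  rw [h] at hup
  rcases habove with _ | @⟨ρ', a', hρ', hρ''⟩ | @⟨ρ', a', hne', hρ'⟩
  · exact absurd (encode_injective hup) hρ
  · exact absurd (hT _ hρ' _ (List.dropLast_prefix ρ')) hρ''
  · exact ⟨ρ', a', rfl, hne', hρ', (encode_injective hup).symm⟩

theorem not_pathTile (hT : IsTree T) (hwf : ¬IllFounded T)
    (hf : IsTiling {t | TreeTile T t} Set.univ f) {x y : ℤ} {ρ : List ℕ} {a : ℕ}
    (hne : ρ ≠ []) (hρ : ρ ∈ T) : f (x, y) ≠ pathTile ρ a := by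
  intro h
  let column (m : ℕ) : List ℕ := topList (f (x, y + m))
  have hcol (m : ℕ) : column m ≠ [] ∧ column m ∈ T ∧ ∃ b, f (x, y + m) = pathTile (column m) b := by
    induction m with
    | zero => simpa [column, h] using ⟨hne, hρ⟩
    | succ m ih =>
      obtain ⟨hne, -, b, hb⟩ := ih
      obtain ⟨ρ', a', habove, hne', hρ', -⟩ := exists_pathTile_above hT hf hne hb
      rw [add_assoc] at habove
      simpa [column, habove] using And.intro hne' hρ'
  refine hwf (illFounded_of_dropLast_chain hT (fun m => (hcol m).2.1) (fun m => (hcol (m + 1)).1)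
    fun m => ?_)
  obtain ⟨hne, -, b, hb⟩ := hcol m
  obtain ⟨ρ', a', habove, -, -, hparent⟩ := exists_pathTile_above hT hf hne hb
  rw [add_assoc] at habove
  simpa [column, habove] using hparent

theorem eq_blank_of_isTiling (hT : IsTree T) (hwf : ¬IllFounded T)
    (hf : IsTiling {t | TreeTile T t} Set.univ f) (p : ℤ × ℤ) : f p = blank := by
  have hp := hf.mem_univ p
  generalize hfp : f p = t at hp
  rcases hp with _ | @⟨ρ, a, hρ, hρ'⟩ | @⟨ρ, a, hne, hρ⟩
  · rfl
  · exact absurd (hT _ hρ _ (List.dropLast_prefix ρ)) hρ'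
  · exact absurd hfp (not_pathTile hT hwf hf hne hρ)

/-- With a linear offset `c * y` instead of `y ^ 2` this would have the period `(-c, 1)`. -/
def counterTiling (ρ : List ℕ) (p : ℤ × ℤ) : WangTile := counterTile ρ (intCode (p.1 + p.2 ^ 2))

theorem isTiling_counterTiling {ρ : List ℕ} (hρ : ρ ∈ T) (hρ' : ρ.dropLast ∉ T) :
    IsTiling {t | TreeTile T t} Set.univ (counterTiling ρ) := by
  refine ⟨fun _ _ => .counter _ hρ hρ', fun x y _ _ => ?_, fun _ _ _ _ => rfl⟩
  simp only [counterTiling, counterTile, tileRight, tileLeft, intCodeSucc_intCode]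
  ring_nf

theorem not_isPeriodic_counterTiling (ρ : List ℕ) : ¬IsPeriodic (counterTiling ρ) := by
  rintro ⟨⟨u, v⟩, huv, hper⟩
  have h₀ := congrArg tileLeft (hper (0, 0))
  have h₁ := congrArg tileLeft (hper (0, 1))
  simp only [counterTiling, tileLeft_counterTile, Prod.mk_add_mk] at h₀ h₁
  replace h₀ := intCode_injective h₀
  replace h₁ := intCode_injective h₁
  obtain rfl : v = 0 := by linarith
  obtain rfl : u = 0 := by simpa using h₀
  exact huv rfl

def pathTiling (p : ℕ → ℕ) (q : ℤ × ℤ) : WangTile :=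
  if q.2 < 0 then blank else pathTile ((List.range (q.2.toNat + 1)).map p) (intCode q.1)

theorem isTiling_pathTiling {p : ℕ → ℕ} (hp : ∀ n, (List.range n).map p ∈ T) :
    IsTiling {t | TreeTile T t} Set.univ (pathTiling p) := by
  have hparent (n : ℕ) : ((List.range (n + 1)).map p).dropLast = (List.range n).map p := by
    simp [List.range_succ]
  refine ⟨fun q _ => ?_, fun x y _ _ => ?_, fun x y _ _ => ?_⟩
  · unfold pathTiling
    split_ifs
    exacts [.blank, .path _ (by simp) (hp _)]
  · unfold pathTiling
    split_ifs
    exacts [rfl, by simp [pathTile, tileRight, tileLeft, intCodeSucc_intCode]]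
  · unfold pathTiling
    rcases lt_trichotomy y (-1) with hy | rfl | hy
    · rw [if_pos (by omega), if_pos (by omega)]
      rfl
    · simp [blank, pathTile, tileUp, tileBottom]
    · rw [if_neg (by omega), if_neg (by omega), show (y + 1).toNat = y.toNat + 1 by omega]
      simp only [pathTile, tileUp, tileBottom, hparent]

theorem not_isPeriodic_pathTiling (p : ℕ → ℕ) : ¬IsPeriodic (pathTiling p) := by
  rintro ⟨⟨u, v⟩, huv, hper⟩
  have h := hper (0, 0)
  simp only [Prod.mk_add_mk, zero_add] at h
  have htop := congrArg topList h
  have hleft := congrArg tileLeft h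
  by_cases hv : v < 0
  · simp [pathTiling, hv] at htop
  · simp only [pathTiling, hv, lt_self_iff_false, ↓reduceIte, topList_pathTile,
      tileLeft_pathTile] at htop hleft
    have hlen := congrArg List.length htop
    simp only [List.length_map, List.length_range] at hlen
    exact huv (Prod.ext (intCode_injective hleft) (by simp only [Prod.snd_zero]; omega))

theorem forall_isPeriodic_iff :
    (∀ f, IsTiling {t | TreeTile T t} Set.univ f → IsPeriodic f) ↔ IsTree T ∧ ¬IllFounded T := by
  refine ⟨fun h => ⟨?_, ?_⟩, fun ⟨hT, hwf⟩ f hf => ?_⟩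
  · by_contra hT
    obtain ⟨ρ, hρ, hρ'⟩ : ∃ ρ ∈ T, ρ.dropLast ∉ T := by
      by_contra! h
      exact hT (isTree_of_dropLast_mem h)
    exact not_isPeriodic_counterTiling ρ (h _ (isTiling_counterTiling hρ hρ'))
  · rintro ⟨p, hp⟩
    exact not_isPeriodic_pathTiling p (h _ (isTiling_pathTiling hp))
  · rw [show f = fun _ => blank from funext (eq_blank_of_isTiling hT hwf hf)]
    exact isPeriodic_const blank

end Tilings

end TreeTiling

/-- `WELL ≤_m PTile`. -/
theorem WELL_manyOneReducible_PTile : (· ∈ WELL) ≤₀ (· ∈ PTile) := by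
  obtain ⟨g, hg, hgspec⟩ := TreeTiling.exists_computable_phiTileSet_eq
  refine ⟨g, hg, fun e => ?_⟩
  by_cases he : PhiTotalBool e
  · simp only [WELL, PTile, Set.mem_ofPred_eq, (hgspec e).2 he, (hgspec e).1, he, true_and,
      TreeTiling.forall_isPeriodic_iff, iff_and_self]
    exact fun _ => ⟨_, TreeTiling.isTiling_const_blank⟩
  · exact iff_of_false (fun h => he h.1) (fun h => he ((hgspec e).1.mp h.1))
end

section
/- If X ⊆ ℕ has the form X = A ∩ B, where A ⊆ ℕ is Σ¹₁ and B ⊆ ℕ is Π¹₁, then X ≤_m PTile. -/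
/-- `X ⊆ ℕ` is `Σ¹₁`. -/
def Sigma11 (X : Set ℕ) : Prop :=
  ∃ R : ℕ × List ℕ → Bool, Computable R ∧
    ∀ n : ℕ, n ∈ X ↔ ∃ f : ℕ → ℕ, ∀ k : ℕ, R (n, (List.range k).map f) = true

/-- `X ⊆ ℕ` is `Π¹₁`. -/
def Pi11 (X : Set ℕ) : Prop :=
  ∃ R : ℕ × List ℕ → Bool, Computable R ∧
    ∀ n : ℕ, n ∈ X ↔ ∀ f : ℕ → ℕ, ∃ k : ℕ, R (n, (List.range k).map f) = true

/-!
Write the `Σ¹₁` set as `{n | T n has a branch}` and the `Π¹₁` set as `{n | U n has no branch}`,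
where `T n`, `U n` are uniformly computable sets of finite sequences and a branch is an infinite
sequence all of whose initial segments lie in the set. A row of tiles reads such a set: left of
a root tile a counter descends to it, right of it each tile carries a sequence extending that of
its left neighbour by one entry, so bi-infinite rows are exactly branches. The tile set for `n`
is the disjoint union of a rigid copy for `T n`, whose columns are constant, and a loose copy
for `U n`, whose rows slide independently. Rigid tilings exist iff `T n` has a branch, and all
are periodic; a branch of `U n` yields a loose tiling with row `y` shifted by `|y|`, which is
aperiodic.
-/

namespace IsTiling

variable {S : Set WangTile} {F : ℤ × ℤ → WangTile}

lemma right_eq_left (hF : IsTiling S Set.univ F) (x y : ℤ) :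
    tileRight (F (x, y)) = tileLeft (F (x + 1, y)) :=
  hF.2.1 x y trivial trivial

lemma up_eq_bottom_s16 (hF : IsTiling S Set.univ F) (x y : ℤ) :
    tileUp (F (x, y)) = tileBottom (F (x, y + 1)) :=
  hF.2.2 x y trivial trivial

end IsTiling

namespace PTileReduction

open Encodable

/-- A cell of a row: `inl k` lies `k + 1` steps left of the root, `inr σ` carries the node `σ`. -/
abbrev Piece : Type := ℕ ⊕ List ℕ

/-- The piece forced immediately to the left. -/
def Piece.pred : Piece → Piece
  | .inl k => .inl (k + 1)
  | .inr σ => if σ = [] then .inl 0 else .inr σ.dropLast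

/-- The position relative to the root. -/
def Piece.height : Piece → ℤ
  | .inl k => -(k + 1)
  | .inr σ => σ.length

def Pieces (T : Set (List ℕ)) : Set Piece := {q | q.elim (fun _ => True) (· ∈ T)}

lemma Piece.height_pred (q : Piece) : q.pred.height = q.height - 1 := by
  rcases q with k | σ
  · simp only [pred, height]; push_cast; ring
  · by_cases hσ : σ = []
    · simp [pred, height, hσ]
    · have := List.length_pos_iff.mpr hσ
      simp only [pred, height, hσ, if_false, List.length_dropLast]
      omega

lemma Piece.eq_inr_of_height_eq {q : Piece} {j : ℕ} (h : q.height = j) :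
    ∃ σ : List ℕ, q = .inr σ ∧ σ.length = j := by
  rcases q with k | σ
  · simp only [height] at h; omega
  · exact ⟨σ, rfl, by simpa [height] using h⟩

def branchRow (g : ℕ → ℕ) (z : ℤ) : Piece :=
  if z < 0 then .inl (-z - 1).toNat else .inr ((List.range z.toNat).map g)

lemma height_branchRow (g : ℕ → ℕ) (z : ℤ) : (branchRow g z).height = z := by
  unfold branchRow
  split_ifs with hz
  · simp only [Piece.height]; omega
  · simp only [Piece.height, List.length_map, List.length_range]; omega

lemma branchRow_injective (g : ℕ → ℕ) : Function.Injective (branchRow g) := fun z z' h => by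
  rw [← height_branchRow g z, h, height_branchRow]

lemma pred_branchRow (g : ℕ → ℕ) (z : ℤ) : (branchRow g (z + 1)).pred = branchRow g z := by
  unfold branchRow
  rcases lt_trichotomy z (-1) with hz | rfl | hz
  · rw [if_pos (by omega), if_pos (by omega)]
    simp only [Piece.pred, Sum.inl.injEq]
    omega
  · simp [Piece.pred]
  · rw [if_neg (by omega), if_neg (by omega), show (z + 1).toNat = z.toNat + 1 by omega,
      List.range_succ, List.map_append]
    simp [Piece.pred]

lemma branchRow_mem_pieces {T : Set (List ℕ)} {g : ℕ → ℕ}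
    (hg : ∀ k, (List.range k).map g ∈ T) (z : ℤ) : branchRow g z ∈ Pieces T := by
  unfold branchRow
  split_ifs
  · trivial
  · exact hg _

lemma height_add_of_pred {r : ℤ → Piece} (hr : ∀ x, (r (x + 1)).pred = r x) (x : ℤ) :
    (r x).height = (r 0).height + x := by
  have hper : Function.Periodic (fun x => (r x).height - x) 1 := fun x => by
    simp only [← hr x, Piece.height_pred]; ring
  linarith [show (r x).height - x = (r 0).height by simpa using hper.int_mul_eq x]

/-- Heights grow by one to the right, so the pieces at heights `0, 1, 2, …` are nodes,
each extending the previous one by a single entry. -/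
theorem illFounded_of_pred {T : Set (List ℕ)} (r : ℤ → Piece) (hT : ∀ x, r x ∈ Pieces T)
    (hr : ∀ x, (r (x + 1)).pred = r x) : IllFounded T := by
  set x₀ := -(r 0).height
  have hheight (j : ℕ) : (r (x₀ + j)).height = j := by rw [height_add_of_pred hr]; ring
  choose σ hσ hlen using fun j => Piece.eq_inr_of_height_eq (hheight j)
  have hdrop (j : ℕ) : (σ (j + 1)).dropLast = σ j := by
    have hne : σ (j + 1) ≠ [] := List.ne_nil_of_length_pos (by rw [hlen]; omega)
    have := hr (x₀ + j)
    rw [show x₀ + j + 1 = x₀ + (j + 1 : ℕ) by push_cast; ring, hσ, hσ] at this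
    simpa [Piece.pred, hne] using this
  set g : ℕ → ℕ := fun j => (σ (j + 1)).getLastD 0
  have hσg (j : ℕ) : σ j = (List.range j).map g := by
    induction j with
    | zero => simpa using hlen 0
    | succ j ih =>
      have hne : σ (j + 1) ≠ [] := List.ne_nil_of_length_pos (by rw [hlen]; omega)
      rw [List.range_succ, List.map_append, ← ih, ← hdrop j, List.map_singleton]
      simpa [g, List.getLastD_eq_getLast?, List.getLast?_eq_some_getLast hne]
        using (List.dropLast_append_getLast hne).symm
  refine ⟨g, fun j => ?_⟩
  simpa [← hσg, hσ, Pieces] using hT (x₀ + j)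

/-- Colours carry a tag in their first `Nat.pair` coordinate; the two tile families use
disjoint tags, so no tiling can mix them. -/
def colour (tag : ℕ) (q : Piece) : ℕ := Nat.pair tag (encode q)

def tileOf (tag : ℕ) (v : Piece → ℕ) (q : Piece) : WangTile :=
  (colour tag q.pred, v q, colour tag q, v q)

/-- Vertical colours repeat the piece, so columns are constant. -/
abbrev rigidTile : Piece → WangTile := tileOf 0 (colour 0)

/-- Vertical colours are blind to the piece, so rows slide independently. -/
abbrev looseTile : Piece → WangTile := tileOf 1 fun _ => Nat.pair 1 0

def tileSet (T U : Set (List ℕ)) : Set WangTile :=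
  rigidTile '' Pieces T ∪ looseTile '' Pieces U

lemma colour_inj {tag : ℕ} {q q' : Piece} : colour tag q = colour tag q' ↔ q = q' := by
  simp [colour, Nat.pair_eq_pair]

lemma tileOf_injective (tag : ℕ) (v : Piece → ℕ) : Function.Injective (tileOf tag v) :=
  fun _ _ h => colour_inj.mp (congrArg tileRight h)

lemma tag_eq_of_mem_tileSet {T U : Set (List ℕ)} {t : WangTile} (ht : t ∈ tileSet T U) :
    (tileLeft t).unpair.1 = (tileRight t).unpair.1 ∧
      (tileUp t).unpair.1 = (tileRight t).unpair.1 ∧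
      (tileBottom t).unpair.1 = (tileRight t).unpair.1 := by
  rcases ht with ⟨q, -, rfl⟩ | ⟨q, -, rfl⟩ <;>
    simp [rigidTile, looseTile, tileOf, colour, tileLeft, tileRight, tileUp, tileBottom]

lemma tag_of_mem_rigid {P : Set Piece} {t : WangTile} (ht : t ∈ rigidTile '' P) :
    (tileRight t).unpair.1 = 0 := by
  obtain ⟨q, -, rfl⟩ := ht
  simp [rigidTile, tileOf, colour, tileRight]

lemma tag_of_mem_loose {P : Set Piece} {t : WangTile} (ht : t ∈ looseTile '' P) :
    (tileRight t).unpair.1 = 1 := by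
  obtain ⟨q, -, rfl⟩ := ht
  simp [looseTile, tileOf, colour, tileRight]

lemma apply_eq_apply_zero_of_step {α : Type*} (κ : ℤ × ℤ → α)
    (hx : ∀ x y, κ (x + 1, y) = κ (x, y)) (hy : ∀ x y, κ (x, y + 1) = κ (x, y))
    (p : ℤ × ℤ) : κ p = κ 0 := by
  have hrow (y : ℤ) : Function.Periodic (fun x => κ (x, y)) 1 := fun x => hx x y
  have hcol : Function.Periodic (fun y => κ (0, y)) 1 := fun y => hy 0 y
  obtain ⟨x, y⟩ := p
  calc κ (x, y) = κ (0, y) := by simpa using (hrow y).int_mul_eq x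
    _ = κ (0, 0) := by simpa using hcol.int_mul_eq y

theorem mem_rigid_or_mem_loose_of_isTiling {T U : Set (List ℕ)} {F : ℤ × ℤ → WangTile}
    (hF : IsTiling (tileSet T U) Set.univ F) :
    (∀ p, F p ∈ rigidTile '' Pieces T) ∨ (∀ p, F p ∈ looseTile '' Pieces U) := by
  have hmem (p) : F p ∈ tileSet T U := hF.1 p trivial
  have hκ (p) : (tileRight (F p)).unpair.1 = (tileRight (F 0)).unpair.1 :=
    apply_eq_apply_zero_of_step (fun p => (tileRight (F p)).unpair.1)
      (fun x y => by
        rw [← (tag_eq_of_mem_tileSet (hmem (x + 1, y))).1, ← hF.right_eq_left])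
      (fun x y => by
        rw [← (tag_eq_of_mem_tileSet (hmem (x, y + 1))).2.2, ← hF.up_eq_bottom_s16,
          (tag_eq_of_mem_tileSet (hmem (x, y))).2.1]) p
  by_cases h0 : (tileRight (F 0)).unpair.1 = 0
  · refine .inl fun p => (hmem p).resolve_right fun h => ?_
    have := (hκ p).symm.trans (tag_of_mem_loose h)
    omega
  · refine .inr fun p => (hmem p).resolve_left fun h => ?_
    exact h0 ((hκ p).symm.trans (tag_of_mem_rigid h))

theorem illFounded_of_isTiling {S : Set WangTile} {T : Set (List ℕ)} {tag : ℕ}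
    {v : Piece → ℕ} {F : ℤ × ℤ → WangTile} (hF : IsTiling S Set.univ F)
    (hT : ∀ p, F p ∈ tileOf tag v '' Pieces T) : IllFounded T := by
  choose q hq hFq using hT
  refine illFounded_of_pred (fun x => q (x, 0)) (fun x => hq _) fun x => ?_
  have := hF.right_eq_left x 0
  rw [← hFq, ← hFq] at this
  exact (colour_inj.mp this).symm

theorem isPeriodic_of_rigid {S : Set WangTile} {P : Set Piece} {F : ℤ × ℤ → WangTile}
    (hF : IsTiling S Set.univ F) (hP : ∀ p, F p ∈ rigidTile '' P) : IsPeriodic F := by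
  refine ⟨(0, 1), by simp, fun ⟨x, y⟩ => ?_⟩
  obtain ⟨q, -, hq⟩ := hP (x, y)
  obtain ⟨q', -, hq'⟩ := hP (x, y + 1)
  have := hF.up_eq_bottom_s16 x y
  rw [← hq, ← hq'] at this
  simp only [Prod.mk_add_mk, add_zero, ← hq, ← hq', colour_inj.mp this.symm]

lemma isTiling_rigidRows {T U : Set (List ℕ)} {f : ℕ → ℕ}
    (hf : ∀ k, (List.range k).map f ∈ T) :
    IsTiling (tileSet T U) Set.univ fun p => rigidTile (branchRow f p.1) :=
  ⟨fun _ _ => .inl ⟨_, branchRow_mem_pieces hf _, rfl⟩,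
    fun x _ _ _ => congrArg (colour 0) (pred_branchRow f x).symm, fun _ _ _ _ => rfl⟩

lemma isTiling_looseRows {T U : Set (List ℕ)} {g : ℕ → ℕ}
    (hg : ∀ k, (List.range k).map g ∈ U) :
    IsTiling (tileSet T U) Set.univ fun p => looseTile (branchRow g (p.1 - |p.2|)) := by
  refine ⟨fun p _ => .inr ⟨_, branchRow_mem_pieces hg _, rfl⟩, fun x y _ _ => ?_,
    fun _ _ _ _ => rfl⟩
  show colour 1 (branchRow g (x - |y|)) = colour 1 (branchRow g (x + 1 - |y|)).pred
  rw [show x + 1 - |y| = x - |y| + 1 by ring, pred_branchRow]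

/-- The root of row `y` sits at `|y|`, and no translation preserves the graph of `|·|`. -/
lemma not_isPeriodic_looseRows (g : ℕ → ℕ) :
    ¬ IsPeriodic fun p : ℤ × ℤ => looseTile (branchRow g (p.1 - |p.2|)) := by
  rintro ⟨⟨a, b⟩, hv, h⟩
  have key (y : ℤ) : a - |y + b| = -|y| := by
    have := branchRow_injective g (tileOf_injective _ _ (h (0, y)))
    simpa using this
  have h0 := key 0
  have h1 := key (-b)
  simp only [zero_add, abs_zero, neg_zero, neg_add_cancel, abs_neg] at h0 h1
  have hb : b = 0 := abs_eq_zero.mp (by linarith [abs_nonneg b])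
  exact hv (by simp [hb, show a = 0 by simpa [hb] using h0])

theorem tiling_iff {T U : Set (List ℕ)} :
    ((∃ F, IsTiling (tileSet T U) Set.univ F) ∧
      ∀ F, IsTiling (tileSet T U) Set.univ F → IsPeriodic F) ↔
    IllFounded T ∧ ¬ IllFounded U := by
  constructor
  · rintro ⟨⟨F, hF⟩, hper⟩
    have hU : ¬ IllFounded U := fun ⟨g, hg⟩ =>
      not_isPeriodic_looseRows g (hper _ (isTiling_looseRows hg))
    refine ⟨?_, hU⟩
    rcases mem_rigid_or_mem_loose_of_isTiling hF with h | h
    · exact illFounded_of_isTiling hF h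
    · exact absurd (illFounded_of_isTiling hF h) hU
  · rintro ⟨⟨f, hf⟩, hU⟩
    refine ⟨⟨_, isTiling_rigidRows hf⟩, fun F hF => ?_⟩
    rcases mem_rigid_or_mem_loose_of_isTiling hF with h | h
    · exact isPeriodic_of_rigid hF h
    · exact absurd (illFounded_of_isTiling hF h) hU

def pieceOf (t : WangTile) : Option Piece := decode (tileRight t).unpair.2

lemma mem_image_tileOf_iff {tag : ℕ} {v : Piece → ℕ} {P : Set Piece} {t : WangTile} :
    t ∈ tileOf tag v '' P ↔ ∃ q ∈ pieceOf t, q ∈ P ∧ tileOf tag v q = t := by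
  constructor
  · rintro ⟨q, hq, rfl⟩
    exact ⟨q, by simp [pieceOf, tileOf, tileRight, colour], hq, rfl⟩
  · rintro ⟨q, -, hq, rfl⟩
    exact ⟨q, hq, rfl⟩

def tileSetTest (a b : List ℕ → Bool) (t : WangTile) : Bool :=
  (pieceOf t).elim false fun q =>
    q.elim (fun _ => true) a && decide (rigidTile q = t) ||
      q.elim (fun _ => true) b && decide (looseTile q = t)

lemma setOf_tileSetTest (a b : List ℕ → Bool) :
    {t | tileSetTest a b t = true} = tileSet {σ | a σ} {σ | b σ} := by
  ext t
  change tileSetTest a b t = true ↔ t ∈ tileSet _ _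
  simp only [tileSet, Set.mem_union, mem_image_tileOf_iff, tileSetTest]
  rcases pieceOf t with _ | q
  · simp
  · rcases q with k | σ <;> simp [Pieces]

lemma primrec_dropLast : Primrec (List.dropLast : List ℕ → List ℕ) :=
  (Primrec.list_reverse.comp (Primrec.list_tail.comp Primrec.list_reverse)).of_eq
    fun l => by simp [List.tail_reverse]

lemma primrec_pred : Primrec Piece.pred := by
  refine (Primrec.sumCasesOn Primrec.id (Primrec.sumInl.comp (Primrec.succ.comp Primrec.snd)).to₂
    (Primrec.ite (Primrec.eq.comp Primrec.snd (Primrec.const [])) (Primrec.const (.inl 0))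
      (Primrec.sumInr.comp (primrec_dropLast.comp Primrec.snd))).to₂).of_eq fun q => ?_
  rcases q <;> rfl

lemma primrec_tileOf (tag : ℕ) {v : Piece → ℕ} (hv : Primrec v) : Primrec (tileOf tag v) := by
  have hc : Primrec (colour tag) := Primrec₂.natPair.comp (Primrec.const tag) Primrec.encode
  exact Primrec.pair (hc.comp primrec_pred) (Primrec.pair hv (Primrec.pair hc hv))

lemma computable₂_tileSetTest {a b : ℕ → List ℕ → Bool} (ha : Computable₂ a)
    (hb : Computable₂ b) : Computable₂ fun n t => tileSetTest (a n) (b n) t := by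
  have hpiece : Computable pieceOf :=
    (Primrec.decode.comp (Primrec.snd.comp (Primrec.unpair.comp
      (Primrec.fst.comp (Primrec.snd.comp Primrec.snd))))).to_comp
  have hpieces {c : ℕ → List ℕ → Bool} (hc : Computable₂ c) :
      Computable₂ fun (p : ℕ × WangTile) (q : Piece) => q.elim (fun _ => true) (c p.1) :=
    (Computable.sumCasesOn (g := fun _ _ => true) Computable.snd (Computable.const true).to₂
      (hc.comp (Computable.fst.comp (Computable.fst.comp Computable.fst))
        Computable.snd).to₂).of_eq
      fun ⟨_, q⟩ => by rcases q <;> rfl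
  have heq {τ : Piece → WangTile} (hτ : Primrec τ) :
      Computable₂ fun (p : ℕ × WangTile) (q : Piece) => decide (τ q = p.2) :=
    (Primrec.eq.comp (hτ.comp Primrec.snd) (Primrec.snd.comp Primrec.fst)).decide.to_comp.to₂
  have hrigid : Primrec rigidTile := primrec_tileOf 0 <|
    Primrec₂.natPair.comp (Primrec.const 0) Primrec.encode
  have hloose : Primrec looseTile := primrec_tileOf 1 (Primrec.const _)
  refine (Computable.option_casesOn (hpiece.comp Computable.snd) (Computable.const false)
    (Primrec.or.to_comp.comp₂ (Primrec.and.to_comp.comp₂ (hpieces ha) (heq hrigid))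
      (Primrec.and.to_comp.comp₂ (hpieces hb) (heq hloose)))).of_eq fun ⟨n, t⟩ => ?_
  dsimp only [tileSetTest]
  rcases pieceOf t <;> rfl

lemma exists_computable_phi_eq {f : ℕ → ℕ → ℕ} (hf : Computable₂ f) :
    ∃ g : ℕ → ℕ, Computable g ∧ ∀ n m, Phi (g n) m = Part.some (f n m) := by
  obtain ⟨c, hc⟩ := Nat.Partrec.Code.exists_code.mp <| Partrec.nat_iff.mp <|
    (hf.comp (Computable.fst.comp Computable.unpair)
      (Computable.snd.comp Computable.unpair)).partrec
  obtain ⟨s, hs, hsc⟩ := Nat.Partrec.Code.smn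
  refine ⟨fun n => encode (s c n), Computable.encode.comp (hs.comp (Computable.const c)
    Computable.id), fun n m => ?_⟩
  simp [Phi, hsc, hc]

lemma exists_computable_phiTileSet_eq {χ : ℕ → WangTile → Bool} (hχ : Computable₂ χ) :
    ∃ g : ℕ → ℕ, Computable g ∧
      ∀ n, PhiTotalBool (g n) ∧ PhiTileSet (g n) = {t | χ n t = true} := by
  obtain ⟨g, hg, hφ⟩ :=
    exists_computable_phi_eq (f := fun n m => (χ n (Denumerable.ofNat _ m)).toNat)
      ((Primrec.cond Primrec.id (Primrec.const 1) (Primrec.const 0)).to_comp.comp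
        (hχ.comp Computable.fst ((Computable.ofNat _).comp Computable.snd)))
  refine ⟨g, hg, fun n => ⟨fun m => ⟨_, by rw [hφ]; exact Part.mem_some _, ?_⟩, ?_⟩⟩
  · cases χ n (Denumerable.ofNat _ m) <;> simp
  · ext t
    change 1 ∈ Phi (g n) (encode t) ↔ χ n t = true
    rw [hφ, Denumerable.ofNat_encode, Part.mem_some_iff]
    cases χ n t <;> decide

end PTileReduction

open PTileReduction in
/-- Every intersection of a `Σ¹₁` set with a `Π¹₁` set is many-one reducible to `PTile`. -/
theorem sigma11_inter_pi11_manyOneReducible_PTile (X A B : Set ℕ)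
    (hX : X = A ∩ B) (hA : Sigma11 A) (hB : Pi11 B) :
    (· ∈ X) ≤₀ (· ∈ PTile) := by
  obtain ⟨RA, hRA, hA⟩ := hA
  obtain ⟨RB, hRB, hB⟩ := hB
  obtain ⟨g, hg, hgS⟩ := exists_computable_phiTileSet_eq <|
    computable₂_tileSetTest (a := fun n σ => RA (n, σ)) (b := fun n σ => !RB (n, σ)) hRA
      (Primrec.not.to_comp.comp hRB)
  refine ⟨g, hg, fun n => ?_⟩
  obtain ⟨htot, hset⟩ := hgS n
  have hA' : n ∈ A ↔ IllFounded {σ | RA (n, σ) = true} := hA n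
  have hB' : n ∈ B ↔ ¬ IllFounded {σ | (!RB (n, σ)) = true} := by
    simp [hB, IllFounded]
  change n ∈ X ↔ g n ∈ PTile
  rw [hX, Set.mem_inter_iff, hA', hB', ← tiling_iff, ← setOf_tileSetTest, ← hset]
  exact (and_iff_right htot).symm
end
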